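/- arXiv:1801.00745 — 2 statements merged into one kernel-verified Lean document; each statement's English description precedes it below -/
import Mathlib

section
/- Let H be a finite-dimensional complex inner product space, let e₀, e₁, e₂, e₃ ∈ H be unit vectors, and let α, β ∈ [0,1]. Set η₀ := ⟨e₃, e₁⟩ and η₁ := ⟨e₀, e₂⟩, and assume |η₀| < 1 and |η₁| < 1. Define g₀ := (e₂ − η₁·e₀)/√(1−|η₁|²), g₁ := (e₁ − η₀·e₃)/√(1−|η₀|²), e := η₀|0⟩ + √(1−|η₀|²)|1⟩, f := η₁|0⟩ + √(1−|η₁|²)|1⟩, and let V : ℂ²⊗ℂ² → ℂ²⊗H be the linear map determined by V|0,0⟩ = |0⟩⊗e₀, V|1,0⟩ = |1⟩⊗e₃, V|0,1⟩ = |0⟩⊗g₀, V|1,1⟩ = |1⟩⊗g₁. Then for all x, y ∈ ℂ, V(ψ_R) = ψ_C, where ψ_R := |0⟩⊗(x·α·|0⟩ + y·√(1−β²)·f) + |1⟩⊗(x·√(1−α²)·e + y·β·|0⟩) ∈ ℂ²⊗ℂ² and ψ_C := |0⟩⊗(x·α·e₀ + y·√(1−β²)·e₂) + |1⟩⊗(x·√(1−α²)·e₁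 + y·β·e₃) ∈ ℂ²⊗H. -/
open scoped ComplexInnerProductSpace

noncomputable section

abbrev Qubit : Type := EuclideanSpace ℂ (Fin 2)
abbrev TwoQubit : Type := EuclideanSpace ℂ (Fin 2 × Fin 2)

/-- The standard basis `|0⟩`, `|1⟩` of `ℂ²`. -/
def ket (i : Fin 2) : Qubit := EuclideanSpace.single i 1

/-- The tensor product of two qubit states, `x ⊗ y`, realized in
`ℂ² ⊗ ℂ² ≅ EuclideanSpace ℂ (Fin 2 × Fin 2)`. -/
def tensor2 (x y : Qubit) : TwoQubit := WithLp.toLp 2 (fun p => x p.1 * y p.2)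

/-- The tensor product `x ⊗ h` of a qubit state with a vector of `H`, realized in
`ℂ² ⊗ H ≅ PiLp 2 (fun _ : Fin 2 => H)`. -/
def tensorH {H : Type*} [NormedAddCommGroup H] [InnerProductSpace ℂ H]
    (x : Qubit) (h : H) : PiLp 2 (fun _ : Fin 2 => H) := WithLp.toLp 2 (fun i => x i • h)

lemma tensor2_add_right (a b c : Qubit) : tensor2 a (b + c) = tensor2 a b + tensor2 a c := by
  ext p
  simp [tensor2, mul_add]

lemma tensor2_smul_right (a b : Qubit) (c : ℂ) : tensor2 a (c • b) = c • tensor2 a b := by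
  ext p
  simp only [tensor2, PiLp.smul_apply, WithLp.ofLp_toLp, smul_eq_mul]
  ring

section TensorH

variable {H : Type*} [NormedAddCommGroup H] [InnerProductSpace ℂ H]

lemma tensorH_add_right (a : Qubit) (h h' : H) :
    tensorH a (h + h') = tensorH a h + tensorH a h' := by
  ext i
  simp [tensorH, smul_add]

lemma tensorH_smul_right (a : Qubit) (h : H) (c : ℂ) :
    tensorH a (c • h) = c • tensorH a h := by
  ext i
  simp only [tensorH, PiLp.smul_apply, WithLp.ofLp_toLp]
  rw [smul_comm]

end TensorH

lemma ofReal_sqrt_one_sub_norm_sq_ne_zero {η : ℂ} (hη : ‖η‖ < 1) :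
    (Real.sqrt (1 - ‖η‖ ^ 2) : ℂ) ≠ 0 :=
  Complex.ofReal_ne_zero.2 <| Real.sqrt_ne_zero'.2 <|
    sub_pos.2 <| pow_lt_one₀ (norm_nonneg η) hη two_ne_zero

lemma eq_smul_add_smul_of_eq_inv_smul_sub {K M : Type*} [Field K] [AddCommGroup M] [Module K M]
    {u v g : M} {c η : K} (hc : c ≠ 0) (hg : g = c⁻¹ • (u - η • v)) : u = η • v + c • g := by
  rw [hg, smul_inv_smul₀ hc, add_sub_cancel]

theorem stmt3_general {H : Type*} [NormedAddCommGroup H] [InnerProductSpace ℂ H]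
    (e₀ e₁ e₂ e₃ : H)
    (α β : ℝ)
    (η₀ η₁ : ℂ)
    (hη₀ : ‖η₀‖ < 1) (hη₁ : ‖η₁‖ < 1)
    (g₀ g₁ : H)
    (hg₀ : g₀ = (Real.sqrt (1 - ‖η₁‖ ^ 2) : ℂ)⁻¹ • (e₂ - η₁ • e₀))
    (hg₁ : g₁ = (Real.sqrt (1 - ‖η₀‖ ^ 2) : ℂ)⁻¹ • (e₁ - η₀ • e₃))
    (e f : Qubit)
    (he : e = η₀ • ket 0 + (Real.sqrt (1 - ‖η₀‖ ^ 2) : ℂ) • ket 1)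
    (hf : f = η₁ • ket 0 + (Real.sqrt (1 - ‖η₁‖ ^ 2) : ℂ) • ket 1)
    (V : TwoQubit →ₗ[ℂ] PiLp 2 (fun _ : Fin 2 => H))
    (hV00 : V (tensor2 (ket 0) (ket 0)) = tensorH (ket 0) e₀)
    (hV10 : V (tensor2 (ket 1) (ket 0)) = tensorH (ket 1) e₃)
    (hV01 : V (tensor2 (ket 0) (ket 1)) = tensorH (ket 0) g₀)
    (hV11 : V (tensor2 (ket 1) (ket 1)) = tensorH (ket 1) g₁) :
    ∀ x y : ℂ,
      V (tensor2 (ket 0) ((x * (α : ℂ)) • ket 0 + (y * (Real.sqrt (1 - β ^ 2) : ℂ)) • f)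
          + tensor2 (ket 1) ((x * (Real.sqrt (1 - α ^ 2) : ℂ)) • e + (y * (β : ℂ)) • ket 0))
        = tensorH (ket 0) ((x * (α : ℂ)) • e₀ + (y * (Real.sqrt (1 - β ^ 2) : ℂ)) • e₂)
          + tensorH (ket 1) ((x * (Real.sqrt (1 - α ^ 2) : ℂ)) • e₁ + (y * (β : ℂ)) • e₃) := by
  intro x y
  -- Solving the definitions of `g₁`, `g₀` for `e₁`, `e₂` writes `ψ_C` in the images of the basis.
  have he₁ := eq_smul_add_smul_of_eq_inv_smul_sub (ofReal_sqrt_one_sub_norm_sq_ne_zero hη₀) hg₁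
  have he₂ := eq_smul_add_smul_of_eq_inv_smul_sub (ofReal_sqrt_one_sub_norm_sq_ne_zero hη₁) hg₀
  rw [he, hf, he₁, he₂]
  simp only [tensor2_add_right, tensor2_smul_right, tensorH_add_right, tensorH_smul_right,
    map_add, map_smul, hV00, hV10, hV01, hV11]

theorem stmt3 {H : Type*} [NormedAddCommGroup H] [InnerProductSpace ℂ H]
    [FiniteDimensional ℂ H]
    (e₀ e₁ e₂ e₃ : H) (he₀ : ‖e₀‖ = 1) (he₁ : ‖e₁‖ = 1) (he₂ : ‖e₂‖ = 1) (he₃ : ‖e₃‖ = 1)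
    (α β : ℝ) (hα : α ∈ Set.Icc (0 : ℝ) 1) (hβ : β ∈ Set.Icc (0 : ℝ) 1)
    (η₀ η₁ : ℂ) (hη₀def : η₀ = ⟪e₃, e₁⟫) (hη₁def : η₁ = ⟪e₀, e₂⟫)
    (hη₀ : ‖η₀‖ < 1) (hη₁ : ‖η₁‖ < 1)
    (g₀ g₁ : H)
    (hg₀ : g₀ = (Real.sqrt (1 - ‖η₁‖ ^ 2) : ℂ)⁻¹ • (e₂ - η₁ • e₀))
    (hg₁ : g₁ = (Real.sqrt (1 - ‖η₀‖ ^ 2) : ℂ)⁻¹ • (e₁ - η₀ • e₃))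
    (e f : Qubit)
    (he : e = η₀ • ket 0 + (Real.sqrt (1 - ‖η₀‖ ^ 2) : ℂ) • ket 1)
    (hf : f = η₁ • ket 0 + (Real.sqrt (1 - ‖η₁‖ ^ 2) : ℂ) • ket 1)
    (V : TwoQubit →ₗ[ℂ] PiLp 2 (fun _ : Fin 2 => H))
    (hV00 : V (tensor2 (ket 0) (ket 0)) = tensorH (ket 0) e₀)
    (hV10 : V (tensor2 (ket 1) (ket 0)) = tensorH (ket 1) e₃)
    (hV01 : V (tensor2 (ket 0) (ket 1)) = tensorH (ket 0) g₀)
    (hV11 : V (tensor2 (ket 1) (ket 1)) = tensorH (ket 1) g₁) :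
    ∀ x y : ℂ,
      V (tensor2 (ket 0) ((x * (α : ℂ)) • ket 0 + (y * (Real.sqrt (1 - β ^ 2) : ℂ)) • f)
          + tensor2 (ket 1) ((x * (Real.sqrt (1 - α ^ 2) : ℂ)) • e + (y * (β : ℂ)) • ket 0))
        = tensorH (ket 0) ((x * (α : ℂ)) • e₀ + (y * (Real.sqrt (1 - β ^ 2) : ℂ)) • e₂)
          + tensorH (ket 1) ((x * (Real.sqrt (1 - α ^ 2) : ℂ)) • e₁ + (y * (β : ℂ)) • e₃) :=
  stmt3_general e₀ e₁ e₂ e₃ α β η₀ η₁ hη₀ hη₁ g₀ g₁ hg₀ hg₁ e f he hf V hV00 hV10 hV01 hV11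
end
end

section
/- Let v₀, v₁ be linearly independent vectors in a finite-dimensional complex inner product space and let σ := |v₀⟩⟨v₁| + |v₁⟩⟨v₀|. Write ⟨v₀, v₁⟩ = a + b·i with a, b ∈ ℝ. Then λ₊ := a + √(‖v₀‖²·‖v₁‖² − b²) and λ₋ := a − √(‖v₀‖²·‖v₁‖² − b²) are both eigenvalues of σ (in particular, by the Cauchy–Schwarz inequality the quantity under the square root is nonnegative). -/
open scoped ComplexInnerProductSpace

noncomputable section

/-- The rank-one operator `|u⟩⟨w| : x ↦ ⟨w, x⟩ • u` (inner product conjugate-linear in the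
first argument). -/
def outer {H : Type*} [NormedAddCommGroup H] [InnerProductSpace ℂ H] (u w : H) :
    H →ₗ[ℂ] H where
  toFun x := ⟪w, x⟫ • u
  map_add' x y := by simp [inner_add_right, add_smul]
  map_smul' c x := by simp [inner_smul_right, smul_smul]

section

variable {H : Type*} [NormedAddCommGroup H] [InnerProductSpace ℂ H]

@[simp]
lemma outer_apply (u w x : H) : outer u w x = ⟪w, x⟫ • u := rfl

/-- On `span {u, w}` the operator acts by the matrix `!![⟪w, u⟫, ‖w‖²; ‖u‖², ⟪u, w⟫]`, whose
characteristic equation is `hμ`; `‖w‖² • u + (μ - ⟪w, u⟫) • w` is an eigenvector of it. -/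
lemma hasEigenvalue_outer_add_outer {u w : H} (hli : LinearIndependent ℂ ![u, w]) {μ : ℂ}
    (hμ : μ ^ 2 - (⟪u, w⟫ + ⟪w, u⟫) * μ + ⟪u, w⟫ * ⟪w, u⟫ - ‖u‖ ^ 2 * ‖w‖ ^ 2 = 0) :
    Module.End.HasEigenvalue (outer u w + outer w u) μ := by
  have hw : w ≠ 0 := by simpa using hli.ne_zero 1
  set x : H := ((‖w‖ : ℂ) ^ 2) • u + (μ - ⟪w, u⟫) • w
  have hx : x ≠ 0 := fun h0 ↦ by
    simpa [hw] using (LinearIndependent.pair_iff.mp hli _ _ h0).1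
  refine Module.End.hasEigenvalue_of_hasEigenvector ⟨Module.End.mem_eigenspace_iff.mpr ?_, hx⟩
  simp only [x, LinearMap.add_apply, outer_apply, inner_add_right, inner_smul_right,
    inner_self_eq_norm_sq_to_K, RCLike.ofReal_eq_complex_ofReal]
  match_scalars
  · ring
  · linear_combination -hμ

lemma sq_im_inner_le_sq_norm_mul_sq_norm (u w : H) : ⟪u, w⟫.im ^ 2 ≤ ‖u‖ ^ 2 * ‖w‖ ^ 2 :=
  calc ⟪u, w⟫.im ^ 2 ≤ ‖⟪u, w⟫‖ ^ 2 := by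
        rw [Complex.sq_norm, Complex.normSq_apply]; nlinarith
    _ ≤ (‖u‖ * ‖w‖) ^ 2 := by gcongr; exact norm_inner_le_norm u w
    _ = ‖u‖ ^ 2 * ‖w‖ ^ 2 := mul_pow _ _ _

end

theorem stmt7_general {H : Type*} [NormedAddCommGroup H] [InnerProductSpace ℂ H]
    (v₀ v₁ : H) (hli : LinearIndependent ℂ ![v₀, v₁])
    (a b : ℝ) (hab : ⟪v₀, v₁⟫ = a + b * Complex.I) :
    0 ≤ ‖v₀‖ ^ 2 * ‖v₁‖ ^ 2 - b ^ 2 ∧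
      Module.End.HasEigenvalue (outer v₀ v₁ + outer v₁ v₀)
        ((a + Real.sqrt (‖v₀‖ ^ 2 * ‖v₁‖ ^ 2 - b ^ 2) : ℝ) : ℂ) ∧
      Module.End.HasEigenvalue (outer v₀ v₁ + outer v₁ v₀)
        ((a - Real.sqrt (‖v₀‖ ^ 2 * ‖v₁‖ ^ 2 - b ^ 2) : ℝ) : ℂ) := by
  have hd : 0 ≤ ‖v₀‖ ^ 2 * ‖v₁‖ ^ 2 - b ^ 2 := by
    have := sq_im_inner_le_sq_norm_mul_sq_norm v₀ v₁
    simp only [hab, Complex.add_im, Complex.ofReal_im, Complex.mul_im, Complex.ofReal_re,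
      Complex.I_re, Complex.I_im] at this
    linarith
  -- With `⟪v₁, v₀⟫ = a - b i` the characteristic equation reads `(μ - a)² = ‖v₀‖²‖v₁‖² - b²`.
  have hroot : ∀ s : ℝ, s ^ 2 = ‖v₀‖ ^ 2 * ‖v₁‖ ^ 2 - b ^ 2 →
      Module.End.HasEigenvalue (outer v₀ v₁ + outer v₁ v₀) ((a + s : ℝ) : ℂ) := by
    intro s hs
    apply hasEigenvalue_outer_add_outer hli
    have hconj : ⟪v₁, v₀⟫ = a - b * Complex.I := by
      rw [← inner_conj_symm, hab, map_add, map_mul, Complex.conj_ofReal, Complex.conj_ofReal,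
        Complex.conj_I, mul_neg, sub_eq_add_neg]
    have hs' : (s : ℂ) ^ 2 = ‖v₀‖ ^ 2 * ‖v₁‖ ^ 2 - b ^ 2 := by exact_mod_cast hs
    rw [hconj, hab]
    push_cast
    linear_combination hs' - (b : ℂ) ^ 2 * Complex.I_sq
  refine ⟨hd, hroot _ (Real.sq_sqrt hd), ?_⟩
  rw [sub_eq_add_neg]
  exact hroot _ (by rw [neg_sq, Real.sq_sqrt hd])

theorem stmt7 {H : Type*} [NormedAddCommGroup H] [InnerProductSpace ℂ H]
    [FiniteDimensional ℂ H] (v₀ v₁ : H) (hli : LinearIndependent ℂ ![v₀, v₁])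
    (a b : ℝ) (hab : ⟪v₀, v₁⟫ = a + b * Complex.I) :
    0 ≤ ‖v₀‖ ^ 2 * ‖v₁‖ ^ 2 - b ^ 2 ∧
      Module.End.HasEigenvalue (outer v₀ v₁ + outer v₁ v₀)
        ((a + Real.sqrt (‖v₀‖ ^ 2 * ‖v₁‖ ^ 2 - b ^ 2) : ℝ) : ℂ) ∧
      Module.End.HasEigenvalue (outer v₀ v₁ + outer v₁ v₀)
        ((a - Real.sqrt (‖v₀‖ ^ 2 * ‖v₁‖ ^ 2 - b ^ 2) : ℝ) : ℂ) :=
  stmt7_general v₀ v₁ hli a b hab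
end
end
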